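/- Fix β > 0. Let Γ₀ be a symmetric positive definite d×d matrix. Then the matrix ODE Γ̇_t = −2 Γ_t (I + β Γ_t)^{−1}, Γ(0) = Γ₀, has a unique global solution on [0,∞), Γ_t remains symmetric positive definite for all t, has the same eigenspaces as Γ₀, and each eigenvalue λ_i(t) of Γ_t satisfies λ_i(t) + β^{−1} log λ_i(t) = λ_i(0) + β^{−1} log λ_i(0) − 2t/β. -/

import Mathlib

/-!
Since `(I + βΓ)⁻¹` is a function of `Γ`, the equation acts on each eigenvalue separately, so the
solution is `Γ_t = φ_t(Γ₀)` in the functional calculus of `Γ₀`, where `φ_t(λ)` solves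
`λ̇ = −2λ/(1 + βλ)`. That scalar equation is separable: `F_β(r) = r + β⁻¹ log r` decreases at the
constant rate `2/β` along it, and `F_β` is an increasing bijection `(0, ∞) → ℝ`, so
`φ_t(λ) = F_β⁻¹(F_β(λ) − 2t/β)` exists, stays positive, and is smooth in `t`. Eigenvectors of
`Γ₀` are eigenvectors of every `φ_t(Γ₀)`.

Uniqueness: the drift is smooth, hence locally Lipschitz, wherever `I + βΓ` is invertible, which
holds along the positive definite solution. Local Gronwall uniqueness, propagated along
`[0, ∞)` by real induction, rules out a second solution.
-/

open Matrix Real Set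

noncomputable section

variable {d : ℕ}

/-- The right-hand side of the covariance ODE `Γ̇ = −2 Γ (I + βΓ)⁻¹`. -/
def covDrift (β : ℝ) (A : Matrix (Fin d) (Fin d) ℝ) : Matrix (Fin d) (Fin d) ℝ :=
  (-2 : ℝ) • (A * (1 + β • A)⁻¹)

/-- A solution of the covariance ODE on `[0,∞)` (entrywise derivatives). -/
def IsCovSolution (β : ℝ) (Γ₀ : Matrix (Fin d) (Fin d) ℝ)
    (Γ : ℝ → Matrix (Fin d) (Fin d) ℝ) : Prop :=
  Γ 0 = Γ₀ ∧ ∀ t ∈ Ici (0 : ℝ), ∀ i j,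
    HasDerivWithinAt (fun s => Γ s i j) (covDrift β (Γ t) i j) (Ici (0 : ℝ)) t

open Filter Topology
open scoped ComplexOrder MatrixOrder

namespace Matrix

variable {n 𝕜 : Type*} [RCLike 𝕜] [Fintype n] [DecidableEq n]

@[fun_prop]
lemma continuousOn_spectrum_real (f : ℝ → ℝ) (A : Matrix n n 𝕜) :
    ContinuousOn f (spectrum ℝ A) :=
  A.finite_real_spectrum.continuousOn f

lemma mem_spectrum_of_mulVec_eq_smul {K : Type*} [Field K] {A : Matrix n n K} {v : n → K}
    {μ : K} (hv0 : v ≠ 0) (hv : A *ᵥ v = μ • v) : μ ∈ spectrum K A := by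
  rw [← spectrum_toLin']
  exact (Module.End.hasEigenvalue_of_hasEigenvector
    ⟨Module.End.mem_eigenspace_iff.2 hv, hv0⟩).mem_spectrum

lemma PosDef.pos_of_mem_spectrum {A : Matrix n n 𝕜} (hA : A.PosDef) {x : ℝ}
    (hx : x ∈ spectrum ℝ A) : 0 < x :=
  (StarOrderedRing.isStrictlyPositive_iff_spectrum_pos A).1 hA.isStrictlyPositive x hx

lemma IsHermitian.cfc_mulVec_of_mulVec_eq_smul {A : Matrix n n 𝕜} (hA : A.IsHermitian)
    {v : n → 𝕜} {μ : ℝ} (hv : A *ᵥ v = μ • v) (f : ℝ → ℝ) : cfc f A *ᵥ v = f μ • v := by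
  set g : ℝ → ℝ := fun x => (f x - f μ) / (x - μ)
  -- At `x = μ` both sides vanish, whatever the junk value `g μ = 0`.
  have hfactor : f = fun x => g x * (x - μ) + f μ := by
    funext x
    rcases eq_or_ne x μ with rfl | hx
    · simp
    · simp [g, div_mul_cancel₀ _ (sub_ne_zero.2 hx)]
  have hcfc : cfc f A = cfc g A * (A - algebraMap ℝ _ μ) + algebraMap ℝ _ (f μ) := by
    conv_lhs => rw [hfactor]
    rw [cfc_add, cfc_mul, cfc_sub, cfc_id' ℝ A hA.isSelfAdjoint,
      cfc_const (f μ) A hA.isSelfAdjoint, cfc_const μ A hA.isSelfAdjoint]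
  rw [hcfc, add_mulVec, ← mulVec_mulVec, sub_mulVec, hv, Algebra.algebraMap_eq_smul_one,
    Algebra.algebraMap_eq_smul_one, smul_mulVec, one_mulVec, sub_self, mulVec_zero, zero_add,
    smul_mulVec, one_mulVec]

lemma IsHermitian.hasDerivAt_cfc_apply {A : Matrix n n 𝕜} (hA : A.IsHermitian)
    {f : ℝ → ℝ → ℝ} {f' : ℝ → ℝ} {t : ℝ}
    (hf : ∀ x ∈ spectrum ℝ A, HasDerivAt (f · x) (f' x) t) (i j : n) :
    HasDerivAt (fun s => cfc (f s) A i j) (cfc f' A i j) t := by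
  simp only [cfc_eq hA, IsHermitian.cfc, Unitary.conjStarAlgAut_apply]
  rw [funext fun s => mul_apply, mul_apply]
  simp only [mul_diagonal, Function.comp_apply]
  refine HasDerivAt.fun_sum fun k _ => ?_
  have hk := (RCLike.ofRealCLM (K := 𝕜)).hasFDerivAt.comp_hasDerivAt t
    (hf _ (hA.eigenvalues_mem_spectrum_real k))
  exact (hk.const_mul _).mul_const _

end Matrix

section Uniqueness

variable {E : Type*} [NormedAddCommGroup E] [NormedSpace ℝ E] {v : E → E} {f g : ℝ → E} {a : ℝ}

lemma ODE_solution_eventuallyEq_nhdsGT {x : ℝ} (hx : x ∈ Ici a) {K : NNReal} {U : Set E}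
    (hU : U ∈ 𝓝 (g x)) (hv : LipschitzOnWith K v U)
    (hf : ∀ t ∈ Ici a, HasDerivWithinAt f (v (f t)) (Ici a) t)
    (hg : ∀ t ∈ Ici a, HasDerivWithinAt g (v (g t)) (Ici a) t) (hfg : f x = g x) :
    ∀ᶠ t in 𝓝[>] x, f t = g t := by
  have hsub : Ici x ⊆ Ici a := Ici_subset_Ici.2 hx
  have hfc : ContinuousOn f (Ici x) := fun t ht => (hf t (hsub ht)).continuousWithinAt.mono hsub
  have hgc : ContinuousOn g (Ici x) := fun t ht => (hg t (hsub ht)).continuousWithinAt.mono hsub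
  have hnear : ∀ᶠ t in 𝓝[≥] x, f t ∈ U ∧ g t ∈ U :=
    ((hfc x self_mem_Ici).tendsto.eventually_mem (hfg ▸ hU)).and
      ((hgc x self_mem_Ici).tendsto.eventually_mem hU)
  obtain ⟨b, hxb, hb⟩ := mem_nhdsGE_iff_exists_Icc_subset.1 hnear
  have heq : EqOn f g (Icc x b) :=
    ODE_solution_unique_of_mem_Icc_right (v := fun _ => v) (s := fun _ => U) (fun _ _ => hv)
      (hfc.mono Icc_subset_Ici_self)
      (fun t ht => (hf t (hsub ht.1)).mono (Ici_subset_Ici.2 (hx.trans ht.1)))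
      (fun t ht => (hb (Ico_subset_Icc_self ht)).1)
      (hgc.mono Icc_subset_Ici_self)
      (fun t ht => (hg t (hsub ht.1)).mono (Ici_subset_Ici.2 (hx.trans ht.1)))
      (fun t ht => (hb (Ico_subset_Icc_self ht)).2) hfg
  exact mem_of_superset (Icc_mem_nhdsGT hxb) heq

theorem ODE_solution_unique_Ici
    (hv : ∀ t ∈ Ici a, ∃ K, ∃ U ∈ 𝓝 (g t), LipschitzOnWith K v U)
    (hf : ∀ t ∈ Ici a, HasDerivWithinAt f (v (f t)) (Ici a) t)
    (hg : ∀ t ∈ Ici a, HasDerivWithinAt g (v (g t)) (Ici a) t) (ha : f a = g a) :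
    EqOn f g (Ici a) := by
  intro b hb
  have hfc : ContinuousOn f (Ici a) := fun t ht => (hf t ht).continuousWithinAt
  have hgc : ContinuousOn g (Ici a) := fun t ht => (hg t ht).continuousWithinAt
  suffices Icc a b ⊆ {t | f t = g t} from this ⟨hb, le_rfl⟩
  refine IsClosed.Icc_subset_of_forall_mem_nhdsWithin ?_ ha fun x ⟨hfg, hx, _⟩ => ?_
  · rw [inter_comm]
    exact ((hfc.mono Icc_subset_Ici_self).prodMk (hgc.mono Icc_subset_Ici_self))
      |>.preimage_isClosed_of_isClosed isClosed_Icc isClosed_diagonal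
  · obtain ⟨K, U, hU, hK⟩ := hv x hx
    exact ODE_solution_eventuallyEq_nhdsGT hx hU hK hf hg hfg

end Uniqueness

section MatrixNorm

attribute [local instance] Matrix.linftyOpNormedAddCommGroup Matrix.linftyOpNormedSpace
  Matrix.linftyOpNormedRing Matrix.linftyOpNormedAlgebra

lemma Matrix.hasDerivWithinAt_of_forall_apply {m n : Type*} [Fintype m] [Fintype n]
    {Γ : ℝ → Matrix m n ℝ} {Γ' : Matrix m n ℝ}
    {s : Set ℝ} {t : ℝ} (h : ∀ i j, HasDerivWithinAt (fun u => Γ u i j) (Γ' i j) s t) :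
    HasDerivWithinAt Γ Γ' s t :=
  (Matrix.ofLinearEquiv ℝ : (m → n → ℝ) ≃ₗ[ℝ] Matrix m n ℝ).toContinuousLinearEquiv.hasFDerivAt
    |>.comp_hasDerivWithinAt (f := fun u i j => Γ u i j) t
    (hasDerivWithinAt_pi.2 fun i => hasDerivWithinAt_pi.2 (h i))

lemma covDrift_exists_lipschitzOnWith {β : ℝ} {A : Matrix (Fin d) (Fin d) ℝ}
    (hA : IsUnit (1 + β • A)) : ∃ K, ∃ U ∈ 𝓝 A, LipschitzOnWith K (covDrift β) U := by
  have : CompleteSpace (Matrix (Fin d) (Fin d) ℝ) := FiniteDimensional.complete ℝ _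
  have hinv : ContDiffAt ℝ 1 Ring.inverse (1 + β • A) := by
    have := contDiffAt_ringInverse (𝕜 := ℝ) (n := 1) hA.unit
    rwa [hA.unit_spec] at this
  have hdrift : covDrift (d := d) β = fun A => (-2 : ℝ) • (A * Ring.inverse (1 + β • A)) :=
    funext fun A => by rw [covDrift, nonsing_inv_eq_ringInverse]
  rw [hdrift]
  have h1 : ContDiffAt ℝ 1 (fun A : Matrix (Fin d) (Fin d) ℝ => 1 + β • A) A :=
    contDiffAt_const.add (contDiffAt_id.const_smul β)
  exact ((contDiffAt_id.mul (hinv.comp A h1)).const_smul (-2 : ℝ)).exists_lipschitzOnWith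

lemma IsCovSolution.eqOn {β : ℝ} {Γ₀ : Matrix (Fin d) (Fin d) ℝ}
    {Γ Γ' : ℝ → Matrix (Fin d) (Fin d) ℝ} (h : IsCovSolution β Γ₀ Γ)
    (h' : IsCovSolution β Γ₀ Γ') (hΓ : ∀ t ∈ Ici (0 : ℝ), IsUnit (1 + β • Γ t)) :
    EqOn Γ' Γ (Ici 0) :=
  ODE_solution_unique_Ici (fun t ht => covDrift_exists_lipschitzOnWith (hΓ t ht))
    (fun t ht => Matrix.hasDerivWithinAt_of_forall_apply (h'.2 t ht))
    (fun t ht => Matrix.hasDerivWithinAt_of_forall_apply (h.2 t ht)) (h'.1.trans h.1.symm)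

end MatrixNorm

namespace CovarianceODE

variable {β : ℝ} {Γ₀ : Matrix (Fin d) (Fin d) ℝ}

def potential (β r : ℝ) : ℝ := r + β⁻¹ * log r

lemma potential_exp (β s : ℝ) : potential β (exp s) = exp s + β⁻¹ * s := by
  rw [potential, log_exp]

lemma strictMono_potential_exp (hβ : 0 < β) : StrictMono fun s => potential β (exp s) := by
  simp only [potential_exp]
  exact exp_strictMono.add (strictMono_mul_left_of_pos (inv_pos.2 hβ))

lemma surjective_potential_exp (hβ : 0 < β) :
    Function.Surjective fun s => potential β (exp s) := by
  simp only [potential_exp]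
  refine Continuous.surjective (by fun_prop) ?_ ?_
  · exact tendsto_atTop_add_left_of_le' _ 0 (Eventually.of_forall fun s => (exp_pos s).le)
      (tendsto_id.const_mul_atTop (inv_pos.2 hβ))
  · exact tendsto_exp_atBot.add_atBot (tendsto_id.const_mul_atBot (inv_pos.2 hβ))

/-- `F_β ∘ exp`: inverting `F_β` in the variable `s = log r` makes the inverse automatically
positive. -/
def potentialExpIso (hβ : 0 < β) : ℝ ≃o ℝ :=
  StrictMono.orderIsoOfSurjective _ (strictMono_potential_exp hβ) (surjective_potential_exp hβ)

def eigenFlow (hβ : 0 < β) (a t : ℝ) : ℝ :=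
  exp ((potentialExpIso hβ).symm (potential β a - 2 * t / β))

lemma eigenFlow_pos (hβ : 0 < β) (a t : ℝ) : 0 < eigenFlow hβ a t := exp_pos _

lemma potential_eigenFlow (hβ : 0 < β) (a t : ℝ) :
    potential β (eigenFlow hβ a t) = potential β a - 2 * t / β :=
  (potentialExpIso hβ).apply_symm_apply _

lemma eigenFlow_zero (hβ : 0 < β) {a : ℝ} (ha : 0 < a) : eigenFlow hβ a 0 = a := by
  have : potentialExpIso hβ (log a) = potential β a := by
    simp [potentialExpIso, exp_log ha]
  rw [eigenFlow, mul_zero, zero_div, sub_zero, ← this, OrderIso.symm_apply_apply, exp_log ha]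

lemma hasDerivAt_eigenFlow (hβ : 0 < β) (a t : ℝ) :
    HasDerivAt (eigenFlow hβ a)
      (-2 * (eigenFlow hβ a t * (1 + β * eigenFlow hβ a t)⁻¹)) t := by
  set e := potentialExpIso hβ
  set y := potential β a - 2 * t / β
  have hG : HasDerivAt e (exp (e.symm y) + β⁻¹) (e.symm y) := by
    have : (e : ℝ → ℝ) = fun s => exp s + β⁻¹ * s := funext fun s => potential_exp β s
    rw [this]
    simpa using (hasDerivAt_exp _).fun_add ((hasDerivAt_id _).const_mul β⁻¹)
  have hinv : HasDerivAt e.symm (exp (e.symm y) + β⁻¹)⁻¹ y :=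
    hG.of_local_left_inverse e.symm.continuous.continuousAt (by positivity)
      (Eventually.of_forall e.apply_symm_apply)
  have hy : HasDerivAt (fun s => potential β a - 2 * s / β) (-(2 / β)) t := by
    simpa using ((hasDerivAt_id t).const_mul 2).div_const β |>.const_sub (potential β a)
  refine (hinv.comp t hy).exp.congr_deriv ?_
  change exp (e.symm y) * _ = -2 * (exp (e.symm y) * (1 + β * exp (e.symm y))⁻¹)
  have := exp_pos (e.symm y)
  field_simp
  ring

lemma covDrift_cfc {A : Matrix (Fin d) (Fin d) ℝ} (hA : A.IsHermitian) {f : ℝ → ℝ}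
    (hf : ∀ x ∈ spectrum ℝ A, 1 + β * f x ≠ 0) :
    covDrift β (cfc f A) = cfc (fun x => -2 * (f x * (1 + β * f x)⁻¹)) A := by
  rw [cfc_const_mul, cfc_mul, cfc_inv (fun x => 1 + β * f x) A hf, cfc_add,
    cfc_const_one ℝ A hA.isSelfAdjoint, cfc_const_mul, covDrift, nonsing_inv_eq_ringInverse]

def covFlow (hβ : 0 < β) (Γ₀ : Matrix (Fin d) (Fin d) ℝ) (t : ℝ) : Matrix (Fin d) (Fin d) ℝ :=
  cfc (eigenFlow hβ · t) Γ₀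

lemma covFlow_posDef (hβ : 0 < β) (hΓ₀ : Γ₀.IsHermitian) (t : ℝ) : (covFlow hβ Γ₀ t).PosDef :=
  ((cfc_isStrictlyPositive_iff _ Γ₀ (ha := hΓ₀.isSelfAdjoint)).2
    fun _ _ => eigenFlow_pos hβ _ t).posDef

lemma covFlow_zero (hβ : 0 < β) (hΓ₀ : Γ₀.PosDef) : covFlow hβ Γ₀ 0 = Γ₀ := by
  rw [covFlow, cfc_congr fun x hx => eigenFlow_zero hβ (hΓ₀.pos_of_mem_spectrum hx),
    cfc_id' ℝ Γ₀ hΓ₀.isHermitian.isSelfAdjoint]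

lemma isCovSolution_covFlow (hβ : 0 < β) (hΓ₀ : Γ₀.PosDef) :
    IsCovSolution β Γ₀ (covFlow hβ Γ₀) := by
  refine ⟨covFlow_zero hβ hΓ₀, fun t _ i j => ?_⟩
  have hdrift : covDrift β (covFlow hβ Γ₀ t) = cfc (fun x => -2 * (eigenFlow hβ x t *
      (1 + β * eigenFlow hβ x t)⁻¹)) Γ₀ :=
    covDrift_cfc hΓ₀.isHermitian fun x _ => by have := eigenFlow_pos hβ x t; positivity
  rw [hdrift]
  exact (hΓ₀.isHermitian.hasDerivAt_cfc_apply
    (fun x _ => hasDerivAt_eigenFlow hβ x t) i j).hasDerivWithinAt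

lemma one_add_smul_covFlow_isUnit (hβ : 0 < β) (hΓ₀ : Γ₀.IsHermitian) (t : ℝ) :
    IsUnit (1 + β • covFlow hβ Γ₀ t) :=
  (PosDef.one.add ((covFlow_posDef hβ hΓ₀ t).smul hβ)).isUnit

end CovarianceODE

open CovarianceODE in
theorem covariance_ode_wellposed (β : ℝ) (hβ : 0 < β)
    (Γ₀ : Matrix (Fin d) (Fin d) ℝ) (hΓ₀ : Γ₀.PosDef) :
    ∃ Γ : ℝ → Matrix (Fin d) (Fin d) ℝ,
      IsCovSolution β Γ₀ Γ ∧
      (∀ Γ' : ℝ → Matrix (Fin d) (Fin d) ℝ,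
        IsCovSolution β Γ₀ Γ' → ∀ t ∈ Ici (0 : ℝ), Γ' t = Γ t) ∧
      (∀ t ∈ Ici (0 : ℝ), (Γ t).PosDef ∧ (Γ t).IsSymm) ∧
      (∀ (v : Fin d → ℝ) (lam0 : ℝ), v ≠ 0 → Γ₀ *ᵥ v = lam0 • v →
        ∃ lam : ℝ → ℝ, lam 0 = lam0 ∧
          ∀ t ∈ Ici (0 : ℝ), Γ t *ᵥ v = lam t • v ∧ 0 < lam t ∧
            lam t + β⁻¹ * Real.log (lam t)
              = lam0 + β⁻¹ * Real.log lam0 - 2 * t / β) := by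
  have hpos := covFlow_posDef hβ hΓ₀.isHermitian
  refine ⟨covFlow hβ Γ₀, isCovSolution_covFlow hβ hΓ₀,
    fun Γ' h' => (isCovSolution_covFlow hβ hΓ₀).eqOn h'
      fun t _ => one_add_smul_covFlow_isUnit hβ hΓ₀.isHermitian t,
    fun t _ => ⟨hpos t, isHermitian_iff_isSymm.1 (hpos t).isHermitian⟩,
    fun v lam0 hv hev => ?_⟩
  have hlam0 : 0 < lam0 := hΓ₀.pos_of_mem_spectrum (mem_spectrum_of_mulVec_eq_smul hv hev)
  exact ⟨eigenFlow hβ lam0, eigenFlow_zero hβ hlam0, fun t _ =>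
    ⟨hΓ₀.isHermitian.cfc_mulVec_of_mulVec_eq_smul hev _, eigenFlow_pos hβ lam0 t,
      potential_eigenFlow hβ lam0 t⟩⟩
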